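/- For odd n ≥ 5 and m = ⌊(n+1)/4⌋, the subgraph of the circulant graph G_n obtained by deleting the two vertices v_0 and v_m is not switching separable. -/

import Mathlib

/-- The `U`-switching of a graph: toggle exactly the edges between `U` and its complement. -/
def SimpleGraph.switch {V : Type*} (G : SimpleGraph V) (U : Set V) : SimpleGraph V where
  Adj a b := a ≠ b ∧ (G.Adj a b ↔ ((a ∈ U) ↔ (b ∈ U)))
  symm := ⟨fun a b => by
    rintro ⟨h, h2⟩
    refine ⟨h.symm, ?_⟩
    rw [G.adj_comm]; tauto⟩
  loopless := ⟨fun a => by simp⟩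

/-- The complete bipartite graph with parts `U` and `Uᶜ` on vertex set `V`. -/
def completeBipartite {V : Type*} (U : Set V) : SimpleGraph V where
  Adj a b := (a ∈ U ∧ b ∉ U) ∨ (b ∈ U ∧ a ∉ U)
  symm := ⟨fun a b => by tauto⟩
  loopless := ⟨fun a => by tauto⟩

/-- `W` is isolable in `G` if `2 ≤ |W|`, `2 ≤ |Wᶜ|`, and some switching of `G`
has no edges between `W` and `Wᶜ`. -/
def SimpleGraph.Isolable {V : Type*} (G : SimpleGraph V) (W : Set V) : Prop :=
  2 ≤ W.ncard ∧ 2 ≤ Wᶜ.ncard ∧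
    ∃ U : Set V, ∀ a ∈ W, ∀ b ∈ Wᶜ, ¬ (G.switch U).Adj a b

def SimpleGraph.SwitchingSeparable {V : Type*} (G : SimpleGraph V) : Prop :=
  ∃ W : Set V, G.Isolable W

/-- The number of edges of `G` among the pairs {a,c}, {a,d}, {b,c}, {b,d}. -/
noncomputable def SimpleGraph.N {V : Type*} (G : SimpleGraph V) (a b c d : V) : ℕ := by
  classical
  exact (if G.Adj a c then 1 else 0) + (if G.Adj a d then 1 else 0) +
    (if G.Adj b c then 1 else 0) + (if G.Adj b d then 1 else 0)

/-- The circulant graph on `ZMod n` with connection set `{±1, …, ±⌊n/4⌋}`. -/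
def circulant (n : ℕ) : SimpleGraph (ZMod n) :=
  SimpleGraph.fromRel (fun a b => ∃ j : ℕ, 1 ≤ j ∧ j ≤ n / 4 ∧ b = a + (j : ZMod n))

/-- Evaluation of a multilinear polynomial over GF(2), given by its coefficient function. -/
def mleval {k : ℕ} (c : Finset (Fin k) → ZMod 2) (x : Fin k → ZMod 2) : ZMod 2 :=
  ∑ s : Finset (Fin k), c s * ∏ i ∈ s, x i

/-- The multilinear polynomial `c` has degree at most `d`. -/
def mldegLE {k : ℕ} (c : Finset (Fin k) → ZMod 2) (d : ℕ) : Prop :=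
  ∀ s : Finset (Fin k), c s ≠ 0 → s.card ≤ d

/-- The graph of a quadratic polynomial: `i ~ j` iff the monomial `x i * x j` occurs. -/
def graphOf {k : ℕ} (c : Finset (Fin k) → ZMod 2) : SimpleGraph (Fin k) where
  Adj i j := i ≠ j ∧ c {i, j} ≠ 0
  symm := ⟨fun i j => by
    rintro ⟨h, h2⟩
    exact ⟨h.symm, by rwa [Finset.pair_comm]⟩⟩
  loopless := ⟨fun i => by simp⟩

/-- The polynomial `c` represents the extended Boolean function `f`
(i.e. they agree on all tuples with an even number of ones). -/
def Represents {k : ℕ} (c : Finset (Fin k) → ZMod 2) (f : (Fin k → ZMod 2) → ZMod 2) : Prop :=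
  ∀ x : Fin k → ZMod 2, (∑ i, x i) = 0 → mleval c x = f x

/-- An extended Boolean function in `k` arguments is separable if on its domain it is the
sum of two Boolean functions depending on disjoint argument sets of at most `k - 2` variables. -/
def EbfSeparable {k : ℕ} (f : (Fin k → ZMod 2) → ZMod 2) : Prop :=
  ∃ A B : Finset (Fin k), Disjoint A B ∧ A.card ≤ k - 2 ∧ B.card ≤ k - 2 ∧
    ∃ g h : (Fin k → ZMod 2) → ZMod 2,
      (∀ x y : Fin k → ZMod 2, (∀ i ∈ A, x i = y i) → g x = g y) ∧
      (∀ x y : Fin k → ZMod 2, (∀ i ∈ B, x i = y i) → h x = h y) ∧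
      ∀ x : Fin k → ZMod 2, (∑ i, x i) = 0 → f x = g x + h x


/-!
Write `t = ⌊n/4⌋` and `m = ⌊(n+1)/4⌋`, so that `n = 2m + 2t + 1`, and suppose the remaining
vertices split as `X ⊔ Y` so that switching at some `T` joins all of `X` to all of `Y`.
If `a, b` lie in the same part and exactly one of them lies in `T`, then every vertex of the
other part is adjacent to exactly one of `a, b`. For consecutive `u, u + 1` this confines the
other part to `{u - t, u + t + 1}`, which the vertex `u + t + 1 + m` (at distance `m` from both)
rules out. Hence membership in `T` is constant along the arcs `[1, m - 1]` and `[m + 1, n - 1]`.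
For `n ≥ 9` the pairs `(-1, 1)` and `(m - 1, m + 1)` are edges across the deleted vertices, and
the same confinement shows that `T` cannot separate both; so `T` is constant and every vertex of
`X` is adjacent to every vertex of `Y`. This is impossible: if `y` is at most `t` steps ahead of
`x`, one of `y + t + 1`, `y + t + 2` remains and is adjacent to neither. For `n = 7` both parts
meet the arc `[3, 6]`, whose ends are non-adjacent without common neighbour; for `n = 5` only
three vertices remain.
-/

namespace ZMod

theorem val_add_eq_or {n : ℕ} [NeZero n] (a b : ZMod n) :
    a.val + b.val < n ∧ (a + b).val = a.val + b.val ∨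
      n ≤ a.val + b.val ∧ (a + b).val + n = a.val + b.val := by
  rcases lt_or_ge (a.val + b.val) n with h | h
  · exact Or.inl ⟨h, val_add_of_lt h⟩
  · exact Or.inr ⟨h, (val_add_val_of_le h).symm⟩

theorem val_natCast_eq_or {n k : ℕ} (hk : k < 2 * n) :
    k < n ∧ (k : ZMod n).val = k ∨ n ≤ k ∧ (k : ZMod n).val + n = k := by
  rcases lt_or_ge k n with h | h
  · exact Or.inl ⟨h, val_natCast_of_lt h⟩
  · obtain ⟨j, rfl⟩ := Nat.exists_eq_add_of_le h
    have := val_natCast_of_lt (n := n) (a := j) (by omega)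
    refine Or.inr ⟨h, ?_⟩
    simp only [Nat.cast_add, natCast_self, zero_add]
    omega

end ZMod

theorem Nat.iff_of_forall_iff_succ {P : ℕ → Prop} {a b : ℕ}
    (h : ∀ k, a ≤ k → k < b → (P k ↔ P (k + 1))) : ∀ k, a ≤ k → k ≤ b → (P a ↔ P k) := by
  intro k hak
  induction k, hak using Nat.le_induction with
  | base => exact fun _ => Iff.rfl
  | succ k hak ih => exact fun hkb => (ih (by omega)).trans (h k hak (by omega))

namespace SimpleGraph

variable {V : Type*} {G : SimpleGraph V} {S : Set V}

/-- Switching `G` at `T` joins every vertex of `X` to every vertex of `Y`; equivalently, switching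
at `T ∆ X` leaves no edge between the parts, as in `SimpleGraph.Isolable`. -/
structure SwitchingCut (G : SimpleGraph V) (S : Set V) where
  X : Set V
  Y : Set V
  T : Set V
  nontrivial_X : X.Nontrivial
  nontrivial_Y : Y.Nontrivial
  disjoint : Disjoint X Y
  union_eq : X ∪ Y = S
  adj_iff : ∀ x ∈ X, ∀ y ∈ Y, G.Adj x y ↔ (x ∈ T ↔ y ∈ T)

namespace SwitchingCut

variable (c : G.SwitchingCut S) {a b x y : V}

def swap : G.SwitchingCut S where
  X := c.Y
  Y := c.X
  T := c.T
  nontrivial_X := c.nontrivial_Y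
  nontrivial_Y := c.nontrivial_X
  disjoint := c.disjoint.symm
  union_eq := by rw [Set.union_comm, c.union_eq]
  adj_iff y hy x hx := by rw [G.adj_comm]; exact (c.adj_iff x hx y hy).trans Iff.comm

theorem mem_of_mem_X (hx : x ∈ c.X) : x ∈ S := c.union_eq ▸ Or.inl hx

theorem mem_of_mem_Y (hy : y ∈ c.Y) : y ∈ S := c.union_eq ▸ Or.inr hy

theorem mem_X_or_mem_Y (hx : x ∈ S) : x ∈ c.X ∨ x ∈ c.Y := by
  rwa [← c.union_eq] at hx

theorem ne_of_mem_X_of_mem_Y (hx : x ∈ c.X) (hy : y ∈ c.Y) : x ≠ y :=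
  c.disjoint.ne_of_mem hx hy

theorem adj_iff_adj_iff (ha : a ∈ c.X) (hb : b ∈ c.X) (hy : y ∈ c.Y) :
    (G.Adj a y ↔ G.Adj b y) ↔ (a ∈ c.T ↔ b ∈ c.T) := by
  rw [c.adj_iff a ha y hy, c.adj_iff b hb y hy]
  tauto

theorem mem_X_and_mem_X_or_mem_Y_and_mem_Y (ha : a ∈ S) (hb : b ∈ S) (hab : G.Adj a b)
    (hT : ¬(a ∈ c.T ↔ b ∈ c.T)) : a ∈ c.X ∧ b ∈ c.X ∨ a ∈ c.Y ∧ b ∈ c.Y := by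
  rcases c.mem_X_or_mem_Y ha with ha | ha <;> rcases c.mem_X_or_mem_Y hb with hb | hb
  · exact Or.inl ⟨ha, hb⟩
  · exact absurd ((c.adj_iff a ha b hb).mp hab) hT
  · exact absurd ((c.adj_iff b hb a ha).mp hab.symm).symm hT
  · exact Or.inr ⟨ha, hb⟩

theorem adj_of_mem_T_iff (hT : ∀ a ∈ S, ∀ b ∈ S, a ∈ c.T ↔ b ∈ c.T) :
    ∀ x ∈ c.X, ∀ y ∈ c.Y, G.Adj x y := fun x hx y hy =>
  (c.adj_iff x hx y hy).mpr (hT x (c.mem_of_mem_X hx) y (c.mem_of_mem_Y hy))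

end SwitchingCut

theorem SwitchingSeparable.nonempty_switchingCut [Finite V]
    (h : (G.induce S).SwitchingSeparable) : Nonempty (G.SwitchingCut S) := by
  obtain ⟨W, hW, hWc, U, hU⟩ := h
  have hinj : Function.Injective (Subtype.val : S → V) := Subtype.val_injective
  refine ⟨{ X := Subtype.val '' W
            Y := Subtype.val '' Wᶜ
            T := Subtype.val '' {a | a ∈ U ↔ a ∉ W}
            nontrivial_X := (Set.one_lt_ncard_iff_nontrivial.mp hW).image hinj
            nontrivial_Y := (Set.one_lt_ncard_iff_nontrivial.mp hWc).image hinj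
            disjoint := (Set.disjoint_image_iff hinj).mpr disjoint_compl_right
            union_eq := by
              rw [← Set.image_union, Set.union_compl_self, Set.image_univ, Subtype.range_coe]
            adj_iff := ?_ }⟩
  rintro _ ⟨a, ha, rfl⟩ _ ⟨b, hb, rfl⟩
  have hb' : b ∉ W := hb
  have hab := hU a ha b hb
  simp only [switch, ne_eq, comap_adj, Function.Embedding.subtype_apply, not_and,
    hinj.mem_set_image, Set.mem_ofPred_eq] at hab ⊢
  have := hab fun h => hb' (h ▸ ha)
  tauto

end SimpleGraph

theorem circulant_eq_circulantGraph (n : ℕ) :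
    circulant n = SimpleGraph.circulantGraph {d : ZMod n | ∃ j : ℕ, 1 ≤ j ∧ j ≤ n / 4 ∧ d = j} := by
  ext a b
  simp only [circulant, SimpleGraph.circulantGraph, SimpleGraph.fromRel_adj, Set.mem_ofPred_eq,
    sub_eq_iff_eq_add']
  exact and_congr_right fun _ => or_comm

def remainingVertices (n : ℕ) : Set (ZMod n) :=
  {w | w ≠ 0 ∧ w ≠ (((n + 1) / 4 : ℕ) : ZMod n)}

section Circulant

variable {n : ℕ}

theorem circulant_adj_add_right {u v : ZMod n} (d : ZMod n) :
    (circulant n).Adj (u + d) (v + d) ↔ (circulant n).Adj u v := by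
  rw [circulant_eq_circulantGraph]
  exact SimpleGraph.circulantGraph_adj_translate

theorem circulant_adj_add_left {u v : ZMod n} (d : ZMod n) :
    (circulant n).Adj (d + u) (d + v) ↔ (circulant n).Adj u v := by
  rw [add_comm d, add_comm d, circulant_adj_add_right]

theorem circulant_adj_self_add {u w : ZMod n} :
    (circulant n).Adj u (u + w) ↔ (circulant n).Adj 0 w := by
  simpa only [zero_add, add_comm w] using circulant_adj_add_right (u := 0) (v := w) u

variable [NeZero n]

theorem circulant_adj_iff_val (a b : ZMod n) :
    (circulant n).Adj a b ↔ a.val ≠ b.val ∧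
      (a.val ≤ b.val + n / 4 ∧ b.val ≤ a.val + n / 4 ∨
        a.val + n ≤ b.val + n / 4 ∨ b.val + n ≤ a.val + n / 4) := by
  have step : ∀ a b : ZMod n, (∃ j : ℕ, 1 ≤ j ∧ j ≤ n / 4 ∧ b = a + j) ↔
      (a.val < b.val ∧ b.val ≤ a.val + n / 4 ∨ b.val < a.val ∧ b.val + n ≤ a.val + n / 4) := by
    intro a b
    have := a.val_lt
    constructor
    · rintro ⟨j, hj₁, hj₂, rfl⟩
      have := ZMod.val_natCast_of_lt (n := n) (a := j) (by omega)
      have := ZMod.val_add_eq_or a j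
      omega
    · intro h
      have := (b - a).val_lt
      have := ZMod.val_add_eq_or (b - a) a
      rw [sub_add_cancel] at this
      exact ⟨(b - a).val, by omega, by omega, by rw [ZMod.natCast_zmod_val]; ring⟩
  simp only [circulant, SimpleGraph.fromRel_adj, step]
  simp only [ne_eq, ← (ZMod.val_injective n).eq_iff]
  have := a.val_lt
  have := b.val_lt
  omega

theorem circulant_adj_zero_one (h4 : 4 ≤ n) : (circulant n).Adj 0 1 := by
  have : (1 : ZMod n).val = 1 := by
    simpa using ZMod.val_natCast_of_lt (n := n) (a := 1) (by omega)
  rw [circulant_adj_iff_val, this, ZMod.val_zero]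
  omega

theorem circulant_eq_of_not_adj_zero_iff_adj_one {w : ZMod n}
    (h : ¬((circulant n).Adj 0 w ↔ (circulant n).Adj 1 w)) :
    w = 0 ∨ w = 1 ∨ w = ((n - n / 4 : ℕ) : ZMod n) ∨ w = ((n / 4 + 1 : ℕ) : ZMod n) := by
  rcases (NeZero.one_le : 1 ≤ n).eq_or_lt with rfl | hn
  · exact Or.inl (Subsingleton.elim _ _)
  have : Fact (1 < n) := ⟨hn⟩
  have := ZMod.val_one n
  have := ZMod.val_natCast_eq_or (n := n) (k := n - n / 4) (by omega)
  have := ZMod.val_natCast_eq_or (n := n) (k := n / 4 + 1) (by omega)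
  have := w.val_lt
  simp only [circulant_adj_iff_val, ← (ZMod.val_injective n).eq_iff, ZMod.val_zero] at h ⊢
  omega

theorem mem_remainingVertices_iff_val {v : ZMod n} :
    v ∈ remainingVertices n ↔ v.val ≠ 0 ∧ v.val ≠ (n + 1) / 4 := by
  have hm : (((n + 1) / 4 : ℕ) : ZMod n).val = (n + 1) / 4 :=
    ZMod.val_natCast_of_lt (by have := NeZero.pos n; omega)
  simp only [remainingVertices, Set.mem_ofPred_eq, ne_eq, ← (ZMod.val_injective n).eq_iff,
    ZMod.val_zero, hm]

theorem natCast_mem_remainingVertices {k : ℕ} (h₀ : 0 < k) (hk : k < n) (hm : k ≠ (n + 1) / 4) :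
    (k : ZMod n) ∈ remainingVertices n := by
  rw [mem_remainingVertices_iff_val, ZMod.val_natCast_of_lt hk]
  omega

theorem circulant_exists_not_adj_not_adj (hn : Odd n) (h7 : 7 ≤ n) {x y : ZMod n}
    (hxy : (circulant n).Adj x y) :
    ∃ v ∈ remainingVertices n, ¬(circulant n).Adj x v ∧ ¬(circulant n).Adj y v := by
  have := Nat.odd_iff.mp hn
  wlog hyx : x.val < y.val ∧ y.val ≤ x.val + n / 4 ∨ y.val + n ≤ x.val + n / 4 generalizing x y
  · obtain ⟨v, hv, hyv, hxv⟩ := this hxy.symm (by rw [circulant_adj_iff_val] at hxy; omega)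
    exact ⟨v, hv, hxv, hyv⟩
  rw [circulant_adj_iff_val] at hxy
  have := x.val_lt
  have := y.val_lt
  have := ZMod.val_natCast_eq_or (n := n) (k := y.val + n / 4 + 1) (by omega)
  have := ZMod.val_natCast_eq_or (n := n) (k := y.val + n / 4 + 2) (by omega)
  by_cases hv : ((y.val + n / 4 + 1 : ℕ) : ZMod n) ∈ remainingVertices n
  · refine ⟨_, hv, ?_, ?_⟩ <;> rw [circulant_adj_iff_val] <;> omega
  · rw [mem_remainingVertices_iff_val] at hv
    refine ⟨((y.val + n / 4 + 2 : ℕ) : ZMod n), ?_, ?_, ?_⟩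
    · rw [mem_remainingVertices_iff_val]
      omega
    all_goals rw [circulant_adj_iff_val]; omega

end Circulant

namespace SimpleGraph.SwitchingCut

variable {n : ℕ} [NeZero n]

section

variable (c : (circulant n).SwitchingCut (remainingVertices n))

theorem mem_T_iff_add_one_of_mem_X (hn : Odd n) (h5 : 5 ≤ n) {u : ZMod n} (h₀ : u ∈ c.X)
    (h₁ : u + 1 ∈ c.X) : u ∈ c.T ↔ u + 1 ∈ c.T := by
  by_contra hT
  set m : ZMod n := (((n + 1) / 4 : ℕ) : ZMod n)
  set C : ZMod n := u + ((n - n / 4 : ℕ) : ZMod n)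
  set D : ZMod n := u + ((n / 4 + 1 : ℕ) : ZMod n)
  have hY : ∀ y ∈ c.Y, y = C ∨ y = D := by
    intro y hy
    obtain ⟨w, rfl⟩ : ∃ w, y = u + w := ⟨y - u, by ring⟩
    have hw := (c.adj_iff_adj_iff h₀ h₁ hy).not.mpr hT
    rw [circulant_adj_self_add, circulant_adj_add_left] at hw
    rcases circulant_eq_of_not_adj_zero_iff_adj_one hw with rfl | rfl | rfl | rfl
    · exact absurd (add_zero u).symm (c.ne_of_mem_X_of_mem_Y h₀ hy)
    · exact absurd rfl (c.ne_of_mem_X_of_mem_Y h₁ hy)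
    · exact Or.inl rfl
    · exact Or.inr rfl
  have hCD : C ∈ c.Y ∧ D ∈ c.Y := by
    obtain ⟨y₁, hy₁, y₂, hy₂, hne⟩ := c.nontrivial_Y
    rcases hY y₁ hy₁ with rfl | rfl <;> rcases hY y₂ hy₂ with rfl | rfl
    all_goals first | exact absurd rfl hne | exact ⟨hy₁, hy₂⟩ | exact ⟨hy₂, hy₁⟩
  -- `D + m` is at distance `m` from both `D` and `C`, since `n = 2m + 2t + 1`
  have hzC : D + m + m = C := by
    simp only [C, D, m, add_assoc, ← Nat.cast_add]
    congr 2
    have := Nat.odd_iff.mp hn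
    omega
  have hm : m ≠ 0 := by
    rw [Ne, ← (ZMod.val_injective n).eq_iff, ZMod.val_natCast_of_lt (by omega), ZMod.val_zero]
    omega
  have hz : D + m ∈ c.X := by
    obtain ⟨-, hCm⟩ := c.mem_of_mem_Y hCD.1
    obtain ⟨hD0, -⟩ := c.mem_of_mem_Y hCD.2
    have hzV : D + m ∈ remainingVertices n :=
      ⟨fun h => hCm (by rw [← hzC, h, zero_add]), fun h => hD0 (add_eq_right.mp h)⟩
    refine (c.mem_X_or_mem_Y hzV).resolve_right fun hzY => ?_
    rcases hY _ hzY with h | h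
    · rw [← hzC] at h
      exact hm (add_eq_left.mp h.symm)
    · exact hm (add_eq_left.mp h)
  have huC : (circulant n).Adj u C := by
    rw [circulant_adj_self_add, circulant_adj_iff_val, ZMod.val_zero,
      ZMod.val_natCast_of_lt (by omega)]
    omega
  have huD : ¬(circulant n).Adj u D := by
    rw [circulant_adj_self_add, circulant_adj_iff_val, ZMod.val_zero,
      ZMod.val_natCast_of_lt (by omega)]
    omega
  have hzCD : (circulant n).Adj (D + m) C ↔ (circulant n).Adj (D + m) D := by
    rw [← hzC, circulant_adj_self_add, (circulant n).adj_comm (D + m), circulant_adj_self_add]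
  have hC := c.adj_iff_adj_iff h₀ hz hCD.1
  have hD := c.adj_iff_adj_iff h₀ hz hCD.2
  tauto

theorem mem_T_iff_add_one (hn : Odd n) (h5 : 5 ≤ n) {u : ZMod n} (h₀ : u ∈ remainingVertices n)
    (h₁ : u + 1 ∈ remainingVertices n) : u ∈ c.T ↔ u + 1 ∈ c.T := by
  by_contra hT
  have hadj : (circulant n).Adj u (u + 1) :=
    circulant_adj_self_add.mpr (circulant_adj_zero_one (by omega))
  rcases c.mem_X_and_mem_X_or_mem_Y_and_mem_Y h₀ h₁ hadj hT with ⟨hX₀, hX₁⟩ | ⟨hY₀, hY₁⟩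
  · exact hT (c.mem_T_iff_add_one_of_mem_X hn h5 hX₀ hX₁)
  · exact hT (c.swap.mem_T_iff_add_one_of_mem_X hn h5 hY₀ hY₁)

theorem mem_T_iff_of_mem_Icc (hn : Odd n) (h5 : 5 ≤ n) {a b : ℕ}
    (hV : ∀ k : ℕ, a ≤ k → k ≤ b → (k : ZMod n) ∈ remainingVertices n) :
    ∀ k : ℕ, a ≤ k → k ≤ b → ((a : ZMod n) ∈ c.T ↔ (k : ZMod n) ∈ c.T) := by
  refine Nat.iff_of_forall_iff_succ (P := fun k => (k : ZMod n) ∈ c.T) fun k hak hkb => ?_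
  have h₁ := hV (k + 1) (by omega) hkb
  rw [Nat.cast_succ] at h₁ ⊢
  exact c.mem_T_iff_add_one hn h5 (hV k hak hkb.le) h₁

theorem mem_T_iff_around_m_of_mem_X (h9 : 9 ≤ n)
    (hp₀ : ((n - 1 : ℕ) : ZMod n) ∈ c.X) (hp₁ : ((1 : ℕ) : ZMod n) ∈ c.X)
    (hq₀ : (((n + 1) / 4 - 1 : ℕ) : ZMod n) ∈ c.X) (hq₁ : (((n + 1) / 4 + 1 : ℕ) : ZMod n) ∈ c.X)
    (hp : ¬(((n - 1 : ℕ) : ZMod n) ∈ c.T ↔ ((1 : ℕ) : ZMod n) ∈ c.T)) :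
    (((n + 1) / 4 - 1 : ℕ) : ZMod n) ∈ c.T ↔ (((n + 1) / 4 + 1 : ℕ) : ZMod n) ∈ c.T := by
  by_contra hq
  obtain ⟨y, hy⟩ := c.nontrivial_Y.nonempty
  have h₀ := (c.adj_iff_adj_iff hp₀ hp₁ hy).not.mpr hp
  have h₁ := (c.adj_iff_adj_iff hq₀ hq₁ hy).not.mpr hq
  have hyp₀ := c.ne_of_mem_X_of_mem_Y hp₀ hy
  have hyp₁ := c.ne_of_mem_X_of_mem_Y hp₁ hy
  have hyq₀ := c.ne_of_mem_X_of_mem_Y hq₀ hy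
  have hyq₁ := c.ne_of_mem_X_of_mem_Y hq₁ hy
  have := y.val_lt
  simp (disch := omega) only [circulant_adj_iff_val, ne_eq, ← (ZMod.val_injective n).eq_iff,
    ZMod.val_natCast_of_lt] at h₀ h₁ hyp₀ hyp₁ hyq₀ hyq₁
  omega

theorem mem_T_iff_around_m_of_mem_Y (h9 : 9 ≤ n)
    (hp₀ : ((n - 1 : ℕ) : ZMod n) ∈ c.X) (hp₁ : ((1 : ℕ) : ZMod n) ∈ c.X)
    (hq₀ : (((n + 1) / 4 - 1 : ℕ) : ZMod n) ∈ c.Y) (hq₁ : (((n + 1) / 4 + 1 : ℕ) : ZMod n) ∈ c.Y) :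
    (((n + 1) / 4 - 1 : ℕ) : ZMod n) ∈ c.T ↔ (((n + 1) / 4 + 1 : ℕ) : ZMod n) ∈ c.T := by
  by_contra hq
  have h₀ := (c.swap.adj_iff_adj_iff hq₀ hq₁ hp₀).not.mpr hq
  have h₁ := (c.swap.adj_iff_adj_iff hq₀ hq₁ hp₁).not.mpr hq
  have hpq := c.ne_of_mem_X_of_mem_Y hp₁ hq₀
  simp (disch := omega) only [circulant_adj_iff_val, ne_eq, ← (ZMod.val_injective n).eq_iff,
    ZMod.val_natCast_of_lt] at h₀ h₁ hpq
  omega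

theorem mem_T_iff_around_zero_or_around_m (h9 : 9 ≤ n) :
    (((n - 1 : ℕ) : ZMod n) ∈ c.T ↔ ((1 : ℕ) : ZMod n) ∈ c.T) ∨
      ((((n + 1) / 4 - 1 : ℕ) : ZMod n) ∈ c.T ↔ (((n + 1) / 4 + 1 : ℕ) : ZMod n) ∈ c.T) := by
  have hp : (circulant n).Adj ((n - 1 : ℕ) : ZMod n) ((1 : ℕ) : ZMod n) := by
    simp (disch := omega) only [circulant_adj_iff_val, ZMod.val_natCast_of_lt]
    omega
  have hq :
      (circulant n).Adj (((n + 1) / 4 - 1 : ℕ) : ZMod n) (((n + 1) / 4 + 1 : ℕ) : ZMod n) := by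
    simp (disch := omega) only [circulant_adj_iff_val, ZMod.val_natCast_of_lt]
    omega
  rw [or_iff_not_imp_left]
  intro hpT
  by_contra hqT
  rcases c.mem_X_and_mem_X_or_mem_Y_and_mem_Y
    (natCast_mem_remainingVertices (by omega) (by omega) (by omega))
    (natCast_mem_remainingVertices (by omega) (by omega) (by omega)) hp hpT
    with ⟨hp₀, hp₁⟩ | ⟨hp₀, hp₁⟩ <;>
  rcases c.mem_X_and_mem_X_or_mem_Y_and_mem_Y
    (natCast_mem_remainingVertices (by omega) (by omega) (by omega))
    (natCast_mem_remainingVertices (by omega) (by omega) (by omega)) hq hqT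
    with ⟨hq₀, hq₁⟩ | ⟨hq₀, hq₁⟩
  · exact hqT (c.mem_T_iff_around_m_of_mem_X h9 hp₀ hp₁ hq₀ hq₁ hpT)
  · exact hqT (c.mem_T_iff_around_m_of_mem_Y h9 hp₀ hp₁ hq₀ hq₁)
  · exact hqT (c.swap.mem_T_iff_around_m_of_mem_Y h9 hp₀ hp₁ hq₀ hq₁)
  · exact hqT (c.swap.mem_T_iff_around_m_of_mem_X h9 hp₀ hp₁ hq₀ hq₁ hpT)

theorem mem_T_iff_of_nine_le (hn : Odd n) (h9 : 9 ≤ n) {v w : ZMod n}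
    (hv : v ∈ remainingVertices n) (hw : w ∈ remainingVertices n) : v ∈ c.T ↔ w ∈ c.T := by
  have hA := c.mem_T_iff_of_mem_Icc hn (by omega) (a := 1) (b := (n + 1) / 4 - 1)
    fun k h₁ h₂ => natCast_mem_remainingVertices (by omega) (by omega) (by omega)
  have hB := c.mem_T_iff_of_mem_Icc hn (by omega) (a := (n + 1) / 4 + 1) (b := n - 1)
    fun k h₁ h₂ => natCast_mem_remainingVertices (by omega) (by omega) (by omega)
  have hAB : ((1 : ℕ) : ZMod n) ∈ c.T ↔ (((n + 1) / 4 + 1 : ℕ) : ZMod n) ∈ c.T := by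
    rcases c.mem_T_iff_around_zero_or_around_m h9 with h | h
    · exact h.symm.trans (hB _ (by omega) le_rfl).symm
    · exact (hA _ (by omega) le_rfl).trans h
  suffices h : ∀ v ∈ remainingVertices n, ((1 : ℕ) : ZMod n) ∈ c.T ↔ v ∈ c.T from
    (h v hv).symm.trans (h w hw)
  intro v hv
  rw [mem_remainingVertices_iff_val] at hv
  have := v.val_lt
  rw [← ZMod.natCast_zmod_val v]
  rcases lt_or_gt_of_ne hv.2 with h | h
  · exact hA _ (by omega) (by omega)
  · exact hAB.trans (hB _ (by omega) (by omega))

theorem ne_seven_of_three_mem_X (h₃ : ((3 : ℕ) : ZMod n) ∈ c.X) : n ≠ 7 := by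
  intro h7
  have hB := c.mem_T_iff_of_mem_Icc (Nat.odd_iff.mpr (by omega)) (by omega) (a := 3) (b := 6)
    fun k h₁ h₂ => natCast_mem_remainingVertices (by omega) (by omega) (by omega)
  have hT : ∀ v ∈ remainingVertices n, v ≠ ((1 : ℕ) : ZMod n) →
      (((3 : ℕ) : ZMod n) ∈ c.T ↔ v ∈ c.T) := by
    intro v hv hv₁
    rw [mem_remainingVertices_iff_val] at hv
    rw [Ne, ← (ZMod.val_injective n).eq_iff, ZMod.val_natCast_of_lt (by omega)] at hv₁
    have := v.val_lt
    rw [← ZMod.natCast_zmod_val v]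
    exact hB _ (by omega) (by omega)
  rcases c.mem_X_or_mem_Y (natCast_mem_remainingVertices (n := n) (k := 6) (by omega) (by omega)
    (by omega)) with h₆ | h₆
  · obtain ⟨y, hy, hy₁⟩ := c.nontrivial_Y.exists_ne ((1 : ℕ) : ZMod n)
    have h₃y := (c.adj_iff _ h₃ y hy).mpr (hT y (c.mem_of_mem_Y hy) hy₁)
    have h₆y := (c.adj_iff _ h₆ y hy).mpr ((hB 6 (by omega) le_rfl).symm.trans
      (hT y (c.mem_of_mem_Y hy) hy₁))
    have := y.val_lt
    simp (disch := omega) only [circulant_adj_iff_val, ZMod.val_natCast_of_lt] at h₃y h₆y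
    omega
  · have h₃₆ := (c.adj_iff _ h₃ _ h₆).mpr (hB 6 (by omega) le_rfl)
    simp (disch := omega) only [circulant_adj_iff_val, ZMod.val_natCast_of_lt] at h₃₆
    omega

end

theorem ne_five (c : (circulant n).SwitchingCut (remainingVertices n)) : n ≠ 5 := by
  rintro rfl
  obtain ⟨x₁, hx₁, x₂, hx₂, hx⟩ := c.nontrivial_X
  obtain ⟨y₁, hy₁, y₂, hy₂, hy⟩ := c.nontrivial_Y
  have h₁₁ := c.ne_of_mem_X_of_mem_Y hx₁ hy₁
  have h₁₂ := c.ne_of_mem_X_of_mem_Y hx₁ hy₂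
  have h₂₁ := c.ne_of_mem_X_of_mem_Y hx₂ hy₁
  have h₂₂ := c.ne_of_mem_X_of_mem_Y hx₂ hy₂
  have vx₁ := mem_remainingVertices_iff_val.mp (c.mem_of_mem_X hx₁)
  have vx₂ := mem_remainingVertices_iff_val.mp (c.mem_of_mem_X hx₂)
  have vy₁ := mem_remainingVertices_iff_val.mp (c.mem_of_mem_Y hy₁)
  have vy₂ := mem_remainingVertices_iff_val.mp (c.mem_of_mem_Y hy₂)
  have := x₁.val_lt
  have := x₂.val_lt
  have := y₁.val_lt
  have := y₂.val_lt
  simp only [ne_eq, ← (ZMod.val_injective 5).eq_iff] at hx hy h₁₁ h₁₂ h₂₁ h₂₂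
  omega

theorem ne_seven (c : (circulant n).SwitchingCut (remainingVertices n)) : n ≠ 7 := by
  intro h7
  rcases c.mem_X_or_mem_Y (natCast_mem_remainingVertices (n := n) (k := 3) (by omega) (by omega)
    (by omega)) with h₃ | h₃
  · exact c.ne_seven_of_three_mem_X h₃ h7
  · exact c.swap.ne_seven_of_three_mem_X h₃ h7

theorem lt_nine (c : (circulant n).SwitchingCut (remainingVertices n)) (hn : Odd n) : n < 9 := by
  by_contra h9
  have hXY := c.adj_of_mem_T_iff fun a ha b hb => c.mem_T_iff_of_nine_le hn (by omega) ha hb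
  obtain ⟨x, hx⟩ := c.nontrivial_X.nonempty
  obtain ⟨y, hy⟩ := c.nontrivial_Y.nonempty
  obtain ⟨v, hv, hxv, hyv⟩ := circulant_exists_not_adj_not_adj hn (by omega) (hXY x hx y hy)
  rcases c.mem_X_or_mem_Y hv with hv | hv
  · exact hyv (hXY v hv y hy).symm
  · exact hxv (hXY x hx v hv)

end SimpleGraph.SwitchingCut

theorem circulant_delete_two_not_separable (n : ℕ) (hodd : Odd n) (h5 : 5 ≤ n) :
    ¬ ((circulant n).induce
        {w : ZMod n | w ≠ 0 ∧ w ≠ (((n + 1) / 4 : ℕ) : ZMod n)}).SwitchingSeparable := by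
  intro hsep
  have : NeZero n := ⟨by omega⟩
  obtain ⟨c⟩ : Nonempty ((circulant n).SwitchingCut (remainingVertices n)) :=
    hsep.nonempty_switchingCut
  have := c.ne_five
  have := c.ne_seven
  have := c.lt_nine hodd
  have := Nat.odd_iff.mp hodd
  omega
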